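/- arXiv:1506.03647 — 4 statements merged into one kernel-verified Lean document; each statement's English description precedes it below -/
import Mathlib

section
/- Let G be a 4-vertex-critical graph containing an induced cycle C all of whose vertices have degree three in G. Then C has odd length, and there exists a 3-coloring of G − V(C) under which all vertices in (⋃_{c ∈ V(C)} N(c)) \ V(C) receive the same color. -/
open SimpleGraph

/-- A graph is `k`-vertex-critical if it is `k`-colorable, not `(k-1)`-colorable, and every
proper induced subgraph is `(k-1)`-colorable. -/
def IsKVertexCritical {V : Type*} (G : SimpleGraph V) (k : ℕ) : Prop :=
  G.Colorable k ∧ ¬ G.Colorable (k - 1) ∧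
    ∀ s : Set V, s ≠ Set.univ → (G.induce s).Colorable (k - 1)

namespace VCAux


def pickne (x y : Fin 3) : Fin 3 :=
  if 0 ≠ x ∧ 0 ≠ y then 0 else if 1 ≠ x ∧ 1 ≠ y then 1 else 2

lemma pickne_spec : ∀ x y : Fin 3, pickne x y ≠ x ∧ pickne x y ≠ y := by decide

lemma exists_cycle_color (n : ℕ) (hn : 3 ≤ n) (f : ℕ → Fin 3)
    (h : Even n ∨ ∃ k, k < n ∧ f k ≠ f ((k + 1) % n)) :
    ∃ g : ℕ → Fin 3, ∀ i, i < n → g i ≠ f i ∧ g i ≠ g ((i + 1) % n) := by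
  have hnpos : 0 < n := by omega
  by_cases hne : ∃ k, k < n ∧ f k ≠ f ((k + 1) % n)
  · obtain ⟨k, hk, hfk⟩ := hne
    set s := (k + 1) % n with hs
    have hsn : s < n := Nat.mod_lt _ hnpos
    set f' : ℕ → Fin 3 := fun m => f ((m + s) % n) with hf'
    set g' : ℕ → Fin 3 :=
      fun i => Nat.rec (f k) (fun j gj => pickne (f' (j + 1)) gj) i with hg'
    have hg'0 : g' 0 = f k := rfl
    have hg'succ : ∀ j : ℕ, g' (j + 1) ≠ f' (j + 1) ∧ g' (j + 1) ≠ g' j :=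
      fun j => pickne_spec _ _
    have hidx : (n - 1 + s) % n = k := by
      rcases Nat.lt_or_ge (k + 1) n with h1 | h1
      · have hs' : s = k + 1 := by rw [hs, Nat.mod_eq_of_lt h1]
        have e : n - 1 + s = k + n := by omega
        rw [e, Nat.add_mod_right, Nat.mod_eq_of_lt hk]
      · have hkn : k + 1 = n := by omega
        have hs0 : s = 0 := by rw [hs, hkn, Nat.mod_self]
        rw [hs0, Nat.add_zero, Nat.mod_eq_of_lt (by omega)]
        omega
    have hfn1 : f' (n - 1) = f k := by rw [hf']; simp only []; rw [hidx]
    have hf'0 : f' 0 = f s := by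
      simp only [hf', Nat.zero_add, Nat.mod_eq_of_lt hsn]
    have hg'0ne : g' 0 ≠ f' 0 := by rw [hg'0, hf'0]; exact hfk
    have hlist : ∀ j, j < n → g' j ≠ f' j := by
      intro j hj
      cases j with
      | zero => exact hg'0ne
      | succ m => exact (hg'succ m).1
    have hstep : ∀ j, j < n → g' j ≠ g' ((j + 1) % n) := by
      intro j hj
      rcases Nat.lt_or_ge (j + 1) n with h1 | h1
      · rw [Nat.mod_eq_of_lt h1]; exact ((hg'succ j).2).symm
      · have hj1 : j = n - 1 := by omega
        have : (j + 1) % n = 0 := by rw [show j + 1 = n by omega, Nat.mod_self]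
        rw [this, hg'0, ← hfn1, ← hj1]
        obtain ⟨m, hm⟩ : ∃ m, j = m + 1 := ⟨j - 1, by omega⟩
        rw [hm]; exact (hg'succ m).1
    refine ⟨fun i => g' ((i + (n - s)) % n), fun i hi => ?_⟩
    set j := (i + (n - s)) % n with hj
    have hjn : j < n := Nat.mod_lt _ hnpos
    have hji : (j + s) % n = i := by
      rw [hj, Nat.mod_add_mod, Nat.add_assoc, Nat.sub_add_cancel hsn.le,
        Nat.add_mod_right, Nat.mod_eq_of_lt hi]
    beta_reduce
    constructor
    · have := hlist j hjn
      rw [hf'] at this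
      simpa [hji] using this
    · have e : ((i + 1) % n + (n - s)) % n = (j + 1) % n := by
        rw [Nat.mod_add_mod, hj, Nat.mod_add_mod, show i + 1 + (n - s) = i + (n - s) + 1 by omega]
      rw [e]; exact hstep j hjn
  · push_neg at hne
    rcases h with h | h
    · have hf0 : ∀ i, i < n → f i = f 0 := by
        intro i
        induction i with
        | zero => intro _; rfl
        | succ m ih =>
          intro hm
          have h1 := hne m (by omega)
          rw [Nat.mod_eq_of_lt (by omega)] at h1
          rw [← h1]; exact ih (by omega)
      have hA : ∀ a : Fin 3, a + 1 ≠ a ∧ a + 2 ≠ a ∧ a + 1 ≠ a + 2 := by decide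
      refine ⟨fun i => if Even i then f 0 + 1 else f 0 + 2, fun i hi => ?_⟩
      beta_reduce
      constructor
      · rw [hf0 i hi]
        split_ifs
        · exact (hA (f 0)).1
        · exact (hA (f 0)).2.1
      · rcases Nat.lt_or_ge (i + 1) n with h1 | h1
        · rw [Nat.mod_eq_of_lt h1]
          rcases Nat.even_or_odd i with he | ho
          · rw [if_pos he, if_neg (by simp [Nat.even_add_one, he])]
            exact (hA (f 0)).2.2
          · rw [if_neg (by simp [Nat.not_even_iff_odd.mpr ho]),
              if_pos (by simp [Nat.even_add_one, Nat.not_even_iff_odd.mpr ho])]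
            exact ((hA (f 0)).2.2).symm
      -- i + 1 = n case
        · have hin : i + 1 = n := by omega
          have : (i + 1) % n = 0 := by rw [hin, Nat.mod_self]
          rw [this, if_pos Even.zero]
          have hoi : ¬ Even i := by
            intro he
            have : Even (i + 1) := by rw [hin]; exact h
            simp [Nat.even_add_one, he] at this
          rw [if_neg hoi]
          exact ((hA (f 0)).2.2).symm
    · exact absurd h (by push_neg; exact hne)




variable {V : Type*} {G : SimpleGraph V}

lemma support_getElem {u v : V} (p : G.Walk u v) :
    ∀ (i : ℕ) (h : i < p.support.length), p.support[i] = p.getVert i := by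
  induction p with
  | nil =>
    intro i h
    simp only [Walk.support_nil, List.length_singleton] at h
    interval_cases i
    simp [Walk.getVert_zero]
  | cons adj q ih =>
    intro i h
    cases i with
    | zero => simp [Walk.support_cons]
    | succ m =>
      have h2 : m < q.support.length := by
        simpa [Walk.support_cons, Nat.succ_lt_succ_iff] using h
      simp only [Walk.support_cons, List.getElem_cons_succ, Walk.getVert_cons_succ]
      exact ih m h2

lemma getVert_mod {w : V} (p : G.Walk w w) {i : ℕ} (hi : i ≤ p.length) :
    p.getVert (i % p.length) = p.getVert i := by
  rcases Nat.lt_or_ge i p.length with h | h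
  · rw [Nat.mod_eq_of_lt h]
  · have : i = p.length := by omega
    subst this
    rw [Nat.mod_self, Walk.getVert_zero, Walk.getVert_length]

lemma cycle_getVert_injOn {w : V} {p : G.Walk w w} (hp : p.IsCycle) :
    ∀ i < p.length, ∀ j < p.length, p.getVert i = p.getVert j → i = j := by
  have hlen : 3 ≤ p.length := hp.three_le_length
  have htail : ∀ (i : ℕ) (h : i < p.support.tail.length),
      p.support.tail[i] = p.getVert (i + 1) := by
    intro i h
    have hlt : i + 1 < p.support.length := by
      simp only [List.length_tail] at h; omega
    rw [show p.support.tail[i] = p.support[i+1]'hlt from List.get_tail _ i h hlt,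
      support_getElem]
  have htlen : p.support.tail.length = p.length := by
    rw [List.length_tail, Walk.length_support]; omega
  have hnd : p.support.tail.Nodup := hp.support_nodup
  have key : ∀ i ≤ p.length, ∀ j ≤ p.length, 1 ≤ i → 1 ≤ j →
      p.getVert i = p.getVert j → i = j := by
    intro i hi j hj hi1 hj1 hij
    have e1 := htail (i - 1) (by omega)
    have e2 := htail (j - 1) (by omega)

    rw [show i - 1 + 1 = i by omega] at e1
    rw [show j - 1 + 1 = j by omega] at e2
    have := (hnd.getElem_inj_iff).mp (e1.trans (hij.trans e2.symm))
    omega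
  have h0n : p.getVert 0 = p.getVert p.length := by
    rw [Walk.getVert_zero, Walk.getVert_length]
  intro i hi j hj hij
  rcases Nat.eq_zero_or_pos i with h0 | h0
  · rcases Nat.eq_zero_or_pos j with h1 | h1
    · omega
    · subst h0
      rw [h0n] at hij
      have := key p.length le_rfl j hj.le (by omega) h1 hij
      omega
  · rcases Nat.eq_zero_or_pos j with h1 | h1
    · subst h1
      rw [h0n] at hij
      have := key i hi.le p.length le_rfl h0 (by omega) hij
      omega
    · exact key i hi.le j hj.le h0 h1 hij




variable {V : Type*} {G : SimpleGraph V}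

lemma const_of_consec (n : ℕ) (f : ℕ → Fin 3)
    (h : ∀ k, k < n → f k = f ((k + 1) % n)) : ∀ i, i < n → f i = f 0 := by
  intro i
  induction i with
  | zero => intro _; rfl
  | succ m ih =>
    intro hm
    have h1 := h m (by omega)
    rw [Nat.mod_eq_of_lt (by omega)] at h1
    rw [← h1]; exact ih (by omega)

end VCAux


theorem vertexCritical_induced_cycle_of_degree_three {V : Type*} [Fintype V]
    (G : SimpleGraph V) [DecidableRel G.Adj] (h : IsKVertexCritical G 4)
    {v : V} (p : G.Walk v v) (hp : p.IsCycle) (hind : p.toSubgraph.IsInduced)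
    (hdeg : ∀ x ∈ p.support, G.degree x = 3) :
    Odd p.length ∧
      ∃ c : (G.induce {x | x ∉ p.support}).Coloring (Fin 3), ∃ i : Fin 3,
        ∀ (w : V) (hw : w ∉ p.support), (∃ x ∈ p.support, G.Adj x w) →
          c ⟨w, hw⟩ = i := by
  classical
  obtain ⟨hcol4, hnc3, hcrit⟩ := h
  have hn3 : 3 ≤ p.length := hp.three_le_length
  have hnpos : 0 < p.length := by omega
  have hinj := VCAux.cycle_getVert_injOn hp
  -- membership gives an index < length
  have hmem_idx : ∀ x, x ∈ p.support → ∃ i, i < p.length ∧ p.getVert i = x := by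
    intro x hx
    obtain ⟨i, hgi, hile⟩ := Walk.mem_support_iff_exists_getVert.mp hx
    exact ⟨i % p.length, Nat.mod_lt _ hnpos, by rw [VCAux.getVert_mod p hile]; exact hgi⟩
  have hmemV : ∀ i, i ≤ p.length → p.getVert i ∈ p.support := fun i hi =>
    Walk.mem_support_iff_exists_getVert.mpr ⟨i, rfl, hi⟩
  -- the "previous index" identity
  have hprev : ∀ i, i < p.length → ((i + (p.length - 1)) % p.length + 1) % p.length = i := by
    intro i hi
    rw [Nat.mod_add_mod, show i + (p.length - 1) + 1 = i + p.length by omega,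
      Nat.add_mod_right, Nat.mod_eq_of_lt hi]
  -- adjacency along the cycle
  have hadj_succ : ∀ i, i < p.length → G.Adj (p.getVert i) (p.getVert ((i + 1) % p.length)) := by
    intro i hi
    have h2 := p.adj_getVert_succ hi
    rwa [← VCAux.getVert_mod p (by omega : i + 1 ≤ p.length)] at h2
  -- neighbors inside the support are exactly the cycle neighbors
  have hnbr : ∀ i, i < p.length → ∀ y, y ∈ p.support → G.Adj (p.getVert i) y →
      y = p.getVert ((i + 1) % p.length) ∨
        y = p.getVert ((i + (p.length - 1)) % p.length) := by
    intro i hi y hy hadj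
    have hxv : p.getVert i ∈ p.toSubgraph.verts := by
      rw [Walk.mem_verts_toSubgraph]; exact hmemV i hi.le
    have hyv : y ∈ p.toSubgraph.verts := by rw [Walk.mem_verts_toSubgraph]; exact hy
    have hsub := hind hxv hyv hadj
    rw [Walk.toSubgraph_adj_iff] at hsub
    obtain ⟨i', heq, hi'⟩ := hsub
    rw [Sym2.eq_iff] at heq
    rcases heq with ⟨h1, h2⟩ | ⟨h1, h2⟩
    · have he : i' = i := hinj i' hi' i hi h1
      subst he
      left
      rw [← h2, ← VCAux.getVert_mod p (by omega : i' + 1 ≤ p.length)]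
    · right
      have e1 : p.getVert ((i' + 1) % p.length) = p.getVert i := by
        rw [VCAux.getVert_mod p (by omega : i' + 1 ≤ p.length)]; exact h2
      have he : (i' + 1) % p.length = i := hinj _ (Nat.mod_lt _ hnpos) i hi e1
      have he2 : i' = (i + (p.length - 1)) % p.length := by
        rcases Nat.lt_or_ge (i' + 1) p.length with hc | hc
        · rw [Nat.mod_eq_of_lt hc] at he
          rw [show i + (p.length - 1) = i' + p.length by omega, Nat.add_mod_right,
            Nat.mod_eq_of_lt hi']
        · have hc2 : i' + 1 = p.length := by omega
          rw [hc2, Nat.mod_self] at he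
          rw [← he, Nat.zero_add, Nat.mod_eq_of_lt (by omega)]
          omega
      rw [← he2]; exact h1.symm
  -- existence of an outside neighbor
  have hout : ∀ i, i < p.length → ∃ w, w ∉ p.support ∧ G.Adj (p.getVert i) w := by
    intro i hi
    by_contra hcon
    push_neg at hcon
    have hsubset : G.neighborFinset (p.getVert i) ⊆
        {p.getVert ((i + 1) % p.length), p.getVert ((i + (p.length - 1)) % p.length)} := by
      intro y hy
      rw [SimpleGraph.mem_neighborFinset] at hy
      have hys : y ∈ p.support := by
        by_contra hys; exact (hcon y hys) hy
      rcases hnbr i hi y hys hy with h' | h' <;> simp [h']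
    have hcard := Finset.card_le_card hsubset
    rw [SimpleGraph.card_neighborFinset_eq_degree, hdeg _ (hmemV i hi.le)] at hcard
    have h2 : ({p.getVert ((i + 1) % p.length),
        p.getVert ((i + (p.length - 1)) % p.length)} : Finset V).card ≤ 2 :=
      (Finset.card_insert_le _ _).trans (by simp)
    omega
  -- uniqueness of the outside neighbor
  have hmodne : ∀ i, i < p.length →
      (i + 1) % p.length ≠ (i + (p.length - 1)) % p.length := by
    intro i hi hEq
    have h2 : (i + 2) % p.length = i := by
      have : (i + 2) % p.length = ((i + 1) % p.length + 1) % p.length := by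
        rw [Nat.mod_add_mod]
      rw [this, hEq, hprev i hi]
    rcases Nat.lt_or_ge (i + 2) p.length with hc | hc
    · rw [Nat.mod_eq_of_lt hc] at h2; omega
    · rcases Nat.eq_or_lt_of_le hc with hc2 | hc2
      · rw [← hc2, Nat.mod_self] at h2; omega
      · have hc3 : i + 2 = p.length + 1 := by omega
        rw [hc3, show p.length + 1 = 1 + p.length by omega, Nat.add_mod_right,
          Nat.mod_eq_of_lt (by omega)] at h2
        omega
  have huniq : ∀ i, i < p.length → ∀ w1 w2, w1 ∉ p.support → w2 ∉ p.support →
      G.Adj (p.getVert i) w1 → G.Adj (p.getVert i) w2 → w1 = w2 := by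
    intro i hi w1 w2 h1 h2 a1 a2
    by_contra hne
    set nx := p.getVert ((i + 1) % p.length) with hnx
    set pv := p.getVert ((i + (p.length - 1)) % p.length) with hpv
    have hnxs : nx ∈ p.support := hmemV _ (Nat.mod_lt _ hnpos).le
    have hpvs : pv ∈ p.support := hmemV _ (Nat.mod_lt _ hnpos).le
    have hnxpv : nx ≠ pv := by
      intro he
      exact hmodne i hi (hinj _ (Nat.mod_lt _ hnpos) _ (Nat.mod_lt _ hnpos) he)
    have hadjnx : G.Adj (p.getVert i) nx := hadj_succ i hi
    have hadjpv : G.Adj (p.getVert i) pv := by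
      have := hadj_succ ((i + (p.length - 1)) % p.length) (Nat.mod_lt _ hnpos)
      rw [hprev i hi] at this
      exact this.symm
    have c1 : w1 ∉ ({w2, nx, pv} : Finset V) := by
      simp only [Finset.mem_insert, Finset.mem_singleton]
      rintro (rfl | rfl | rfl)
      · exact hne rfl
      · exact h1 hnxs
      · exact h1 hpvs
    have c2 : w2 ∉ ({nx, pv} : Finset V) := by
      simp only [Finset.mem_insert, Finset.mem_singleton]
      rintro (rfl | rfl)
      · exact h2 hnxs
      · exact h2 hpvs
    have c3 : nx ∉ ({pv} : Finset V) := by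
      simp only [Finset.mem_singleton]; exact hnxpv
    have hsub : ({w1, w2, nx, pv} : Finset V) ⊆ G.neighborFinset (p.getVert i) := by
      intro y hy
      rw [SimpleGraph.mem_neighborFinset]
      simp only [Finset.mem_insert, Finset.mem_singleton] at hy
      rcases hy with rfl | rfl | rfl | rfl
      · exact a1
      · exact a2
      · exact hadjnx
      · exact hadjpv
    have hc4 : ({w1, w2, nx, pv} : Finset V).card = 4 := by
      rw [Finset.card_insert_of_notMem c1, Finset.card_insert_of_notMem c2,
        Finset.card_insert_of_notMem c3, Finset.card_singleton]
    have := Finset.card_le_card hsub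
    rw [hc4, SimpleGraph.card_neighborFinset_eq_degree, hdeg _ (hmemV i hi.le)] at this
    omega
  -- the coloring of the complement of the cycle
  have hvmem : v ∈ p.support := p.start_mem_support
  have hne_univ : ({x | x ∉ p.support} : Set V) ≠ Set.univ := by
    intro he
    have : v ∈ ({x | x ∉ p.support} : Set V) := he ▸ Set.mem_univ v
    exact this hvmem
  have hc3 : (G.induce {x | x ∉ p.support}).Colorable 3 := by
    have := hcrit _ hne_univ
    norm_num at this
    exact this
  obtain ⟨φ⟩ := hc3
  obtain ⟨w0, hw0, -⟩ := hout 0 hnpos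
  have hex : ∀ i : ℕ, ∃ w, w ∉ p.support ∧ (i < p.length → G.Adj (p.getVert i) w) := by
    intro i
    by_cases hi : i < p.length
    · obtain ⟨w, hw, ha⟩ := hout i hi; exact ⟨w, hw, fun _ => ha⟩
    · exact ⟨w0, hw0, fun h' => absurd h' hi⟩
  choose nbf hnb1 hnb2 using hex
  set f : ℕ → Fin 3 := fun i => φ ⟨nbf i, hnb1 i⟩ with hf
  have hφ_eq : ∀ i, i < p.length → ∀ w (hw : w ∉ p.support),
      G.Adj (p.getVert i) w → φ ⟨w, hw⟩ = f i := by
    intro i hi w hw hadj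
    have he : w = nbf i := huniq i hi w (nbf i) hw (hnb1 i) hadj (hnb2 i hi)
    subst he
    rfl
  -- main contradiction argument
  have hkey : ¬ (Even p.length ∨ ∃ k, k < p.length ∧ f k ≠ f ((k + 1) % p.length)) := by
    intro hcase
    obtain ⟨g, hg⟩ := VCAux.exists_cycle_color p.length hn3 f hcase
    have hmem_idx' : ∀ x : V, ∃ i, x ∈ p.support → (i < p.length ∧ p.getVert i = x) := by
      intro x
      by_cases hx : x ∈ p.support
      · obtain ⟨i, h1, h2⟩ := hmem_idx x hx; exact ⟨i, fun _ => ⟨h1, h2⟩⟩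
      · exact ⟨0, fun h' => absurd h' hx⟩
    choose idx hidx using hmem_idx'
    set ψ : V → Fin 3 := fun x => if hx : x ∈ p.support then g (idx x) else φ ⟨x, hx⟩ with hψ
    have hmix : ∀ x y (hx : x ∈ p.support) (hy : y ∉ p.support), G.Adj x y →
        g (idx x) ≠ φ ⟨y, hy⟩ := by
      intro x y hx hy hadj
      obtain ⟨hilt, hgv⟩ := hidx x hx
      have he : φ ⟨y, hy⟩ = f (idx x) := hφ_eq (idx x) hilt y hy (by rw [hgv]; exact hadj)
      rw [he]
      exact (hg (idx x) hilt).1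
    have hboth : ∀ x y (hx : x ∈ p.support) (hy : y ∈ p.support), G.Adj x y →
        g (idx x) ≠ g (idx y) := by
      intro x y hx hy hadj
      obtain ⟨hix, hgx⟩ := hidx x hx
      obtain ⟨hiy, hgy⟩ := hidx y hy
      have hstep' : ∀ a, a < p.length → g a ≠ g ((a + 1) % p.length) :=
        fun a ha => (hg a ha).2
      rcases hnbr (idx x) hix y hy (by rw [hgx]; exact hadj) with h' | h'
      · have he : idx y = (idx x + 1) % p.length :=
          hinj _ hiy _ (Nat.mod_lt _ hnpos) (by rw [hgy, h'])
        rw [he]; exact hstep' _ hix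
      · have hprevlt : (idx x + (p.length - 1)) % p.length < p.length := Nat.mod_lt _ hnpos
        have hidy : idx y = (idx x + (p.length - 1)) % p.length :=
          hinj _ hiy _ hprevlt (by rw [hgy, h'])
        have hpi : (idx y + 1) % p.length = idx x := by rw [hidy]; exact hprev _ hix
        have h2 := hstep' (idx y) (by rw [hidy]; exact hprevlt)
        rw [hpi] at h2
        exact h2.symm
    have hproper : ∀ {x y}, G.Adj x y → ψ x ≠ ψ y := by
      intro x y hadj
      by_cases hx : x ∈ p.support <;> by_cases hy' : y ∈ p.support
      · simp only [hψ, dif_pos hx, dif_pos hy']; exact hboth x y hx hy' hadj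
      · simp only [hψ, dif_pos hx, dif_neg hy']; exact hmix x y hx hy' hadj
      · simp only [hψ, dif_neg hx, dif_pos hy']; exact (hmix y x hy' hx hadj.symm).symm
      · simp only [hψ, dif_neg hx, dif_neg hy']
        exact φ.valid hadj
    exact hnc3 ⟨SimpleGraph.Coloring.mk ψ hproper⟩
  push_neg at hkey
  obtain ⟨hodd, hconst⟩ := hkey
  refine ⟨Nat.not_even_iff_odd.mp hodd, φ, f 0, ?_⟩
  rintro w hw ⟨x, hx, hxw⟩
  obtain ⟨i, hi, hgv⟩ := hmem_idx x hx
  rw [hφ_eq i hi w hw (by rw [hgv]; exact hxw)]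
  exact VCAux.const_of_consec p.length f hconst i hi
end

section
/- Let G be a k-vertex-critical graph and let U, W be non-empty disjoint vertex subsets of G. Let H be the (k−1)-hull of G − U, i.e., the graph on V(G) \ U where two vertices are adjacent iff they receive different colors in every (k−1)-coloring of G − U. If φ is a graph homomorphism from the subgraph of G induced by U to the subgraph of H induced by W, then there exists a vertex u ∈ U with N_G(u) \ U ⊄ N_H(φ(u)). -/
open SimpleGraph

/-- The `k`-hull of a graph `G`: distinct vertices `u`, `v` are adjacent iff `u` and `v`
receive different colors in every `k`-coloring of `G`. -/
def kHull {V : Type*} (G : SimpleGraph V) (k : ℕ) : SimpleGraph V where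
  Adj u v := u ≠ v ∧ ∀ c : G.Coloring (Fin k), c u ≠ c v
  symm := by
    constructor
    intro u v ⟨h1, h2⟩
    exact ⟨h1.symm, fun c => (h2 c).symm⟩
  loopless := by constructor; intro u ⟨h1, _⟩; exact h1 rfl

/-!
Suppose every `u ∈ U` had `N_G(u) \ U ⊆ N_H(φ u)`. Take a `(k-1)`-coloring `c` of `G - U`, which
exists by criticality, and color each `u ∈ U` by `c (φ u)`. Hull edges are exactly the pairs that
every such `c` separates, so edges inside `U` (mapped to hull edges by `φ`) and edges from `U` to
`V \ U` (hull edges by assumption) are properly colored: `G` would be `(k-1)`-colorable.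
-/

namespace SimpleGraph

variable {V α : Type*} {G : SimpleGraph V} {U : Set V}

def Coloring.extendCompl [DecidablePred (· ∈ U)] (c : (G.induce Uᶜ).Coloring α) (f : U → ↥Uᶜ)
    (hU : ∀ a b : U, G.Adj a b → c (f a) ≠ c (f b))
    (hUc : ∀ (a : U) (x : ↥Uᶜ), G.Adj a x → c (f a) ≠ c x) : G.Coloring α :=
  Coloring.mk (fun v => if hv : v ∈ U then c (f ⟨v, hv⟩) else c ⟨v, hv⟩) fun {a b} hab => by
    by_cases ha : a ∈ U <;> by_cases hb : b ∈ U <;> simp only [ha, hb, dif_pos]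
    · exact hU ⟨a, ha⟩ ⟨b, hb⟩ hab
    · exact hUc ⟨a, ha⟩ ⟨b, hb⟩ hab
    · exact (hUc ⟨b, hb⟩ ⟨a, ha⟩ hab.symm).symm
    · exact c.valid (show (G.induce Uᶜ).Adj ⟨a, ha⟩ ⟨b, hb⟩ from hab)

theorem colorable_of_hom_kHull_induce_compl {n : ℕ} (hcol : (G.induce Uᶜ).Colorable n)
    (φ : G.induce U →g kHull (G.induce Uᶜ) n)
    (hφ : ∀ (a : U) (x : ↥Uᶜ), G.Adj a x → (kHull (G.induce Uᶜ) n).Adj (φ a) x) :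
    G.Colorable n := by
  classical
  obtain ⟨c⟩ := hcol
  exact ⟨c.extendCompl φ (fun a b hab => (φ.map_rel hab).2 c) fun a x hax => (hφ a x hax).2 c⟩

end SimpleGraph

theorem IsKVertexCritical.colorable_induce_compl {V : Type*} {G : SimpleGraph V} {k : ℕ}
    (h : IsKVertexCritical G k) {U : Set V} (hU : U.Nonempty) :
    (G.induce Uᶜ).Colorable (k - 1) :=
  h.2.2 Uᶜ fun hUc => hU.ne_empty (Set.compl_univ_iff.mp hUc)

theorem vertexCritical_homomorphism_trick_general {V : Type*} (G : SimpleGraph V) (k : ℕ)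
    (h : IsKVertexCritical G k) (U W : Set V)
    (hUne : U.Nonempty)
    (φ : (G.induce U) →g ((kHull (G.induce Uᶜ) (k - 1)).induce {x : ↥Uᶜ | ↑x ∈ W})) :
    ∃ (u : V) (hu : u ∈ U), ∃ (x : V) (hx : x ∉ U), G.Adj u x ∧
      ¬ (kHull (G.induce Uᶜ) (k - 1)).Adj (φ ⟨u, hu⟩ : ↥Uᶜ) ⟨x, hx⟩ := by
  by_contra! hnbr
  exact h.2.1 <| colorable_of_hom_kHull_induce_compl (h.colorable_induce_compl hUne)
    ((Embedding.induce _).toHom.comp φ) fun a x hax => hnbr a a.2 x x.2 hax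

theorem vertexCritical_homomorphism_trick {V : Type*} (G : SimpleGraph V) (k : ℕ)
    (h : IsKVertexCritical G k) (U W : Set V)
    (hUne : U.Nonempty) (hWne : W.Nonempty) (hdisj : Disjoint U W)
    (φ : (G.induce U) →g ((kHull (G.induce Uᶜ) (k - 1)).induce {x : ↥Uᶜ | ↑x ∈ W})) :
    ∃ (u : V) (hu : u ∈ U), ∃ (x : V) (hx : x ∉ U), G.Adj u x ∧
      ¬ (kHull (G.induce Uᶜ) (k - 1)).Adj (φ ⟨u, hu⟩ : ↥Uᶜ) ⟨x, hx⟩ :=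
  vertexCritical_homomorphism_trick_general G k h U W hUne φ
end

section
/- Every cutset of a k-critical graph contains at least two non-adjacent vertices; equivalently, no clique of a k-critical graph is a cutset. -/
open SimpleGraph

/-- A graph is `k`-critical if it is `k`-colorable, not `(k-1)`-colorable, and every
proper subgraph is `(k-1)`-colorable. -/
def IsKCritical {V : Type*} (G : SimpleGraph V) (k : ℕ) : Prop :=
  G.Colorable k ∧ ¬ G.Colorable (k - 1) ∧
    ∀ H : G.Subgraph, H ≠ ⊤ → H.coe.Colorable (k - 1)

lemma key_glue {V : Type*} (G : SimpleGraph V) (k : ℕ) (h : IsKCritical G k)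
    (A B : Set V) (hA : A ≠ Set.univ) (hB : B ≠ Set.univ)
    (hUnion : A ∪ B = Set.univ)
    (hcov : ∀ u v, G.Adj u v → (u ∈ A ∧ v ∈ A) ∨ (u ∈ B ∧ v ∈ B))
    (hclique : G.IsClique (A ∩ B)) : False := by
  classical
  set n := k - 1 with hn
  -- colorings of the induced subgraphs
  have hHA : (⊤ : G.Subgraph).induce A ≠ ⊤ := by
    intro hcontr
    have : A = Set.univ := by
      have := congrArg SimpleGraph.Subgraph.verts hcontr
      simpa using this
    exact hA this
  have hHB : (⊤ : G.Subgraph).induce B ≠ ⊤ := by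
    intro hcontr
    have : B = Set.univ := by
      have := congrArg SimpleGraph.Subgraph.verts hcontr
      simpa using this
    exact hB this
  obtain ⟨c₁⟩ := h.2.2 _ hHA
  obtain ⟨c₂⟩ := h.2.2 _ hHB
  -- c₁ : coloring of ((⊤ : G.Subgraph).induce A).coe with Fin n
  have hadjA : ∀ (u v : V) (hu : u ∈ A) (hv : v ∈ A), G.Adj u v →
      ((⊤ : G.Subgraph).induce A).coe.Adj ⟨u, hu⟩ ⟨v, hv⟩ := by
    intro u v hu hv huv
    simp [SimpleGraph.Subgraph.coe_adj, SimpleGraph.Subgraph.induce_adj, hu, hv, huv]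
  have hadjB : ∀ (u v : V) (hu : u ∈ B) (hv : v ∈ B), G.Adj u v →
      ((⊤ : G.Subgraph).induce B).coe.Adj ⟨u, hu⟩ ⟨v, hv⟩ := by
    intro u v hu hv huv
    simp [SimpleGraph.Subgraph.coe_adj, SimpleGraph.Subgraph.induce_adj, hu, hv, huv]
  -- injective restrictions to the clique A ∩ B
  set e₁ : ↥(A ∩ B) → Fin n := fun x => c₁ ⟨x.1, x.2.1⟩ with he₁
  set e₂ : ↥(A ∩ B) → Fin n := fun x => c₂ ⟨x.1, x.2.2⟩ with he₂
  have inj₁ : Function.Injective e₁ := by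
    intro x y hxy
    by_contra hne
    have hxy' : (x : V) ≠ y := fun hc => hne (Subtype.ext hc)
    have hadj := hclique x.2 y.2 hxy'
    exact c₁.valid (hadjA _ _ x.2.1 y.2.1 hadj) hxy
  have inj₂ : Function.Injective e₂ := by
    intro x y hxy
    by_contra hne
    have hxy' : (x : V) ≠ y := fun hc => hne (Subtype.ext hc)
    have hadj := hclique x.2 y.2 hxy'
    exact c₂.valid (hadjB _ _ x.2.2 y.2.2 hadj) hxy
  set σ : Equiv.Perm (Fin n) :=
    ((Equiv.ofInjective e₂ inj₂).symm.trans (Equiv.ofInjective e₁ inj₁)).extendSubtype with hσ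
  have hagree : ∀ (x : V) (hx : x ∈ A ∩ B), σ (c₂ ⟨x, hx.2⟩) = c₁ ⟨x, hx.1⟩ := by
    intro x hx
    have hmem : c₂ ⟨x, hx.2⟩ ∈ Set.range e₂ := ⟨⟨x, hx⟩, rfl⟩
    rw [hσ, Equiv.extendSubtype_apply_of_mem _ _ hmem]
    have : (Equiv.ofInjective e₂ inj₂).symm ⟨c₂ ⟨x, hx.2⟩, hmem⟩ = ⟨x, hx⟩ := by
      apply (Equiv.ofInjective e₂ inj₂).injective
      simp only [Equiv.apply_symm_apply]
      rfl
    exact congrArg e₁ this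
  -- the glued coloring
  have hmemB : ∀ v : V, v ∉ A → v ∈ B := by
    intro v hv
    have : v ∈ A ∪ B := hUnion ▸ Set.mem_univ v
    exact this.resolve_left hv
  set f : V → Fin n := fun v =>
    if hv : v ∈ A then c₁ ⟨v, hv⟩ else σ (c₂ ⟨v, hmemB v hv⟩) with hf
  have hfA : ∀ (v : V) (hv : v ∈ A), f v = c₁ ⟨v, hv⟩ := by
    intro v hv; simp [hf, hv]
  have hfB : ∀ (v : V) (hv : v ∈ B), f v = σ (c₂ ⟨v, hv⟩) := by
    intro v hv
    by_cases hvA : v ∈ A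
    · rw [hfA v hvA, hagree v ⟨hvA, hv⟩]
    · simp [hf, hvA]
  have hvalid : ∀ {u v : V}, G.Adj u v → f u ≠ f v := by
    intro u v huv
    rcases hcov u v huv with ⟨hu, hv⟩ | ⟨hu, hv⟩
    · rw [hfA u hu, hfA v hv]
      exact c₁.valid (hadjA _ _ hu hv huv)
    · rw [hfB u hu, hfB v hv]
      intro hcontr
      exact c₂.valid (hadjB _ _ hu hv huv) (σ.injective hcontr)
  exact h.2.1 ⟨SimpleGraph.Coloring.mk f hvalid⟩

/-- No clique of a `k`-critical graph is a cutset: deleting a clique does not increase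
the number of connected components. -/
theorem critical_no_clique_cutset {V : Type*} (G : SimpleGraph V) (k : ℕ)
    (h : IsKCritical G k) (X : Set V) (hX : G.IsClique X) :
    ¬ Nat.card G.ConnectedComponent <
        Nat.card (G.induce Xᶜ).ConnectedComponent := by
  classical
  intro hcon
  -- V is nonempty
  have hV : Nonempty V := by
    by_contra hV
    rw [not_nonempty_iff] at hV
    exact h.2.1 ⟨SimpleGraph.Coloring.mk (fun v => (hV.elim v)) (by intro u; exact (hV.elim u))⟩
  -- G is preconnected
  have hpre : ∀ a b : V, G.Reachable a b := by
    by_contra hpre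
    push_neg at hpre
    obtain ⟨a, b, hab⟩ := hpre
    refine key_glue G k h {v | G.Reachable a v} {v | G.Reachable a v}ᶜ ?_ ?_ (by simp) ?_ (by simp)
    · intro hc
      refine hab ?_
      have : b ∈ {v | G.Reachable a v} := by rw [hc]; trivial
      exact this
    · intro hc
      have : a ∈ ({v | G.Reachable a v}ᶜ : Set V) := hc ▸ Set.mem_univ a
      exact this (SimpleGraph.Reachable.refl a)
    · intro u v huv
      by_cases hu : G.Reachable a u
      · exact Or.inl ⟨hu, hu.trans huv.reachable⟩
      · refine Or.inr ⟨hu, ?_⟩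
        intro hv
        exact hu (hv.trans huv.symm.reachable)
  -- hence the component type of G has exactly one element
  have hsub : Subsingleton G.ConnectedComponent := by
    constructor
    intro x y
    obtain ⟨u, rfl⟩ := x.exists_rep
    obtain ⟨v, rfl⟩ := y.exists_rep
    exact SimpleGraph.ConnectedComponent.sound (hpre u v)
  have hone : Nat.card G.ConnectedComponent = 1 := by
    have : Nonempty G.ConnectedComponent := ⟨G.connectedComponentMk hV.some⟩
    exact Nat.card_eq_one_iff_unique.mpr ⟨hsub, this⟩
  rw [hone] at hcon
  have hfin : Finite ((G.induce Xᶜ).ConnectedComponent) :=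
    Nat.finite_of_card_ne_zero (by omega)
  have hnt : Nontrivial ((G.induce Xᶜ).ConnectedComponent) :=
    Finite.one_lt_card_iff_nontrivial.mp hcon
  obtain ⟨x, y, hxy⟩ := hnt
  obtain ⟨a, rfl⟩ := x.exists_rep
  obtain ⟨b, rfl⟩ := y.exists_rep
  have hnr : ¬ (G.induce Xᶜ).Reachable a b := by
    intro hr
    exact hxy (SimpleGraph.ConnectedComponent.sound hr)
  -- the component of `a` in `G.induce Xᶜ`, as a set of vertices of `V`
  set C : Set V := {v | ∃ hv : v ∈ Xᶜ, (G.induce Xᶜ).Reachable a ⟨v, hv⟩} with hC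
  have hCX : C ⊆ Xᶜ := fun v hv => hv.1
  have haC : (a : V) ∈ C := ⟨a.2, SimpleGraph.Reachable.refl a⟩
  refine key_glue G k h (C ∪ X) Cᶜ ?_ ?_ ?_ ?_ ?_
  · intro hc
    have hb : (b : V) ∈ C ∪ X := hc ▸ Set.mem_univ _
    rcases hb with hb | hb
    · obtain ⟨hb', hr⟩ := hb
      exact hnr (hr.trans (SimpleGraph.Reachable.refl _)).symm.symm |>.elim
    · exact b.2 hb
  · intro hc
    have : (a : V) ∈ (Cᶜ : Set V) := hc ▸ Set.mem_univ _
    exact this haC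
  · rw [Set.union_assoc]
    rw [Set.eq_univ_iff_forall]
    intro v
    by_cases hv : v ∈ C
    · exact Or.inl hv
    · exact Or.inr (Or.inr hv)
  · intro u v huv
    by_cases hu : u ∈ C
    · by_cases hv : v ∈ X
      · exact Or.inl ⟨Or.inl hu, Or.inr hv⟩
      · refine Or.inl ⟨Or.inl hu, Or.inl ?_⟩
        obtain ⟨hu', hr⟩ := hu
        have hadj : (G.induce Xᶜ).Adj ⟨u, hu'⟩ ⟨v, hv⟩ := huv
        exact ⟨hv, hr.trans hadj.reachable⟩
    · by_cases hv : v ∈ C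
      · by_cases hu' : u ∈ X
        · exact Or.inl ⟨Or.inr hu', Or.inl hv⟩
        · refine Or.inl ⟨Or.inl ?_, Or.inl hv⟩
          obtain ⟨hv', hr⟩ := hv
          have hadj : (G.induce Xᶜ).Adj ⟨v, hv'⟩ ⟨u, hu'⟩ := huv.symm
          exact ⟨hu', hr.trans hadj.reachable⟩
      · exact Or.inr ⟨hu, hv⟩
  · refine hX.subset ?_
    intro v hv
    rcases hv.1 with hvC | hvX
    · exact absurd hvC hv.2
    · exact hvX
end

section
/- In any graph G, if C is an induced cycle of odd length all of whose vertices have degree 3 in G, and c is a proper 3-coloring of G − V(C) in which all vertices of (⋃_{x ∈ V(C)} N(x)) \ V(C) do NOT receive the same color, then c extends to a proper 3-coloring of G. -/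
open SimpleGraph

/-- Pick a color different from both `a` and `b`. -/
private def pick3 (a b : Fin 3) : Fin 3 :=
  if a ≠ 0 ∧ b ≠ 0 then 0 else if a ≠ 1 ∧ b ≠ 1 then 1 else 2

private lemma pick3_ne : ∀ a b : Fin 3, pick3 a b ≠ a ∧ pick3 a b ≠ b := by decide

/-- Greedy list-coloring of a cycle indexed by `ZMod n`, with one forbidden color per
vertex, provided the forbidden colors are not constant along the cycle. -/
private lemma cycle_color (n : ℕ) (hn : 3 ≤ n) (f : ZMod n → Fin 3)
    (hgood : ∃ i, f i ≠ f (i + 1)) :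
    ∃ col : ZMod n → Fin 3, (∀ i, col i ≠ f i) ∧ (∀ i, col i ≠ col (i + 1)) := by
  haveI : NeZero n := ⟨by omega⟩
  haveI : Fact (1 < n) := ⟨by omega⟩
  obtain ⟨i₀, hi₀⟩ := hgood
  let d : ℕ → Fin 3 := fun k =>
    Nat.rec (f i₀) (fun k dk => pick3 (f (i₀ + 1 + ((k + 1 : ℕ) : ZMod n))) dk) k
  have hd0 : d 0 = f i₀ := rfl
  have hdsucc : ∀ k, d (k + 1) = pick3 (f (i₀ + 1 + ((k + 1 : ℕ) : ZMod n))) (d k) :=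
    fun _ => rfl
  have hA : ∀ k : ℕ, d k ≠ f (i₀ + 1 + (k : ZMod n)) := by
    intro k
    cases k with
    | zero => simpa [hd0] using hi₀
    | succ k => rw [hdsucc]; exact (pick3_ne _ _).1
  refine ⟨fun i => d ((i - (i₀ + 1)).val), ?_, ?_⟩
  · intro i
    have hcast : (((i - (i₀ + 1)).val : ℕ) : ZMod n) = i - (i₀ + 1) :=
      ZMod.natCast_rightInverse _
    have := hA (i - (i₀ + 1)).val
    rw [hcast] at this
    simpa [add_sub_cancel] using this
  · intro i
    set j := (i - (i₀ + 1)).val with hj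
    have hjlt : j < n := ZMod.val_lt _
    have hval1 : (1 : ZMod n).val = 1 := ZMod.val_one n
    have hsub : (i + 1) - (i₀ + 1) = (i - (i₀ + 1)) + 1 := by ring
    have hvj : ((i + 1) - (i₀ + 1)).val = (j + 1) % n := by
      rw [hsub, ZMod.val_add, hval1]
    show d j ≠ d ((i + 1 - (i₀ + 1)).val)
    by_cases hcase : j + 1 < n
    · have h1 : ((i + 1) - (i₀ + 1)).val = j + 1 := by rw [hvj, Nat.mod_eq_of_lt hcase]
      rw [h1, hdsucc]
      exact ((pick3_ne _ _).2).symm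
    · have hj' : j = n - 1 := by omega
      have h1 : ((i + 1) - (i₀ + 1)).val = 0 := by
        rw [hvj, hj', Nat.sub_add_cancel (by omega), Nat.mod_self]
      rw [h1, hd0]
      have := hA j
      have hcast : ((j : ℕ) : ZMod n) = -1 := by
        rw [hj', Nat.cast_sub (by omega), Nat.cast_one, ZMod.natCast_self]
        ring
      rw [hcast] at this
      simpa using this

/-- `support[i]? = getVert i` for `i ≤ length`. -/
private lemma support_getElem? {V : Type*} {G : SimpleGraph V} :
    ∀ {u v : V} (q : G.Walk u v) (i : ℕ), i ≤ q.length →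
      q.support[i]? = some (q.getVert i) := by
  intro u v q
  induction q with
  | nil =>
    intro i hi
    obtain rfl : i = 0 := Nat.le_zero.mp hi
    simp
  | cons h q ih =>
    intro i hi
    cases i with
    | zero => simp
    | succ i =>
      simp only [SimpleGraph.Walk.support_cons, SimpleGraph.Walk.getVert_cons_succ]
      rw [List.getElem?_cons_succ]
      exact ih i (by simpa [SimpleGraph.Walk.length_cons] using hi)

/-- If `C` is an odd induced cycle all of whose vertices have degree 3 in `G`, and `c` is a
proper 3-coloring of `G − V(C)` in which the outside neighbors of `C` do not all receive the
same color, then `c` extends to a proper 3-coloring of `G`. -/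
theorem extend_coloring_over_odd_cycle {V : Type*} [Fintype V]
    (G : SimpleGraph V) [DecidableRel G.Adj]
    {v : V} (p : G.Walk v v) (hp : p.IsCycle) (hind : p.toSubgraph.IsInduced)
    (hodd : Odd p.length) (hdeg : ∀ x ∈ p.support, G.degree x = 3)
    (c : (G.induce {x | x ∉ p.support}).Coloring (Fin 3))
    (hnotmono : ¬ ∃ i : Fin 3, ∀ (w : V) (hw : w ∉ p.support),
        (∃ x ∈ p.support, G.Adj x w) → c ⟨w, hw⟩ = i) :
    ∃ c' : G.Coloring (Fin 3), ∀ (w : V) (hw : w ∉ p.support), c' w = c ⟨w, hw⟩ := by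
  classical
  set n := p.length with hnlen
  have hn3 : 3 ≤ n := hp.three_le_length
  haveI : NeZero n := ⟨by omega⟩
  set a : ZMod n → V := fun i => p.getVert i.val with ha
  -- injectivity of getVert on [0, n)
  have hgv_inj : ∀ i j : ℕ, i < n → j < n → p.getVert i = p.getVert j → i = j := by
    have htl : p.support.tail.length = n := by
      rw [List.length_tail, SimpleGraph.Walk.length_support]; omega
    have hget : ∀ (k : ℕ) (hk : k < n),
        p.support.tail[k]'(by rw [htl]; exact hk) = p.getVert (k + 1) := by
      intro k hk
      have h2 := support_getElem? p (k + 1) (by omega)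
      rw [p.support_eq_cons, List.getElem?_cons_succ] at h2
      rw [List.getElem?_eq_getElem (by rw [htl]; exact hk)] at h2
      exact Option.some.inj h2
    have hstep : ∀ i j : ℕ, 1 ≤ i → i ≤ n → 1 ≤ j → j ≤ n →
        p.getVert i = p.getVert j → i = j := by
      intro i j hi1 hin hj1 hjn heq
      have e1 := hget (i - 1) (by omega)
      have e2 := hget (j - 1) (by omega)
      rw [Nat.sub_add_cancel hi1] at e1
      rw [Nat.sub_add_cancel hj1] at e2
      have h3 : p.support.tail[i - 1]'(by rw [htl]; omega) =
          p.support.tail[j - 1]'(by rw [htl]; omega) := by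
        rw [e1, e2]; exact heq
      have := (hp.support_nodup.getElem_inj_iff).mp h3
      omega
    have hv0 : p.getVert n = p.getVert 0 := by
      rw [p.getVert_zero, hnlen]; exact p.getVert_length
    intro i j hi hj heq
    by_cases hi0 : i = 0
    · by_cases hj0 : j = 0
      · omega
      · exfalso
        subst hi0
        have := hstep n j (by omega) le_rfl (by omega) (by omega) (hv0.trans heq)
        omega
    · by_cases hj0 : j = 0
      · exfalso
        subst hj0
        have := hstep n i (by omega) le_rfl (by omega) (by omega) (hv0.trans heq.symm)
        omega
      · exact hstep i j (by omega) (by omega) (by omega) (by omega) heq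
  have hinj : Function.Injective a := by
    intro i j hij
    have h1 : i.val = j.val := hgv_inj i.val j.val (ZMod.val_lt i) (ZMod.val_lt j) hij
    have := ZMod.natCast_rightInverse (n := n)
    rw [← this i, ← this j, h1]
  have hmem : ∀ i : ZMod n, a i ∈ p.support :=
    fun i => SimpleGraph.Walk.mem_support_iff_exists_getVert.mpr
      ⟨i.val, rfl, by have := ZMod.val_lt i; omega⟩
  have hk_eq : ∀ k : ℕ, k < n → p.getVert k = a (k : ZMod n) := by
    intro k hk
    simp only [ha]
    rw [ZMod.val_natCast_of_lt hk]
  have hsucc : ∀ k : ℕ, k < n → p.getVert (k + 1) = a ((k : ZMod n) + 1) := by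
    intro k hk
    haveI : Fact (1 < n) := ⟨by omega⟩
    have hval : ((k : ZMod n) + 1).val = (k + 1) % n := by
      rw [ZMod.val_add, ZMod.val_one, ZMod.val_natCast_of_lt hk]
    by_cases h : k + 1 < n
    · simp only [ha]; rw [hval, Nat.mod_eq_of_lt h]
    · have hkn : k + 1 = n := by omega
      simp only [ha]
      rw [hval, hkn, Nat.mod_self, p.getVert_zero, hnlen]
      exact p.getVert_length
  have hmem' : ∀ x ∈ p.support, ∃ i : ZMod n, a i = x := by
    intro x hx
    obtain ⟨k, hk, hkle⟩ := SimpleGraph.Walk.mem_support_iff_exists_getVert.mp hx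
    rcases Nat.lt_or_ge k n with h | h
    · exact ⟨(k : ZMod n), by rw [← hk_eq k h]; exact hk⟩
    · have hkn : k = n := by omega
      refine ⟨0, ?_⟩
      simp only [ha, ZMod.val_zero]
      rw [p.getVert_zero, ← hk, hkn, hnlen, p.getVert_length]
  have hadj : ∀ i : ZMod n, G.Adj (a i) (a (i + 1)) := by
    intro i
    have h1 := p.adj_getVert_succ (i := i.val) (by rw [← hnlen]; exact ZMod.val_lt i)
    rwa [hsucc i.val (ZMod.val_lt i), ZMod.natCast_rightInverse i] at h1
  have hadj' : ∀ (i : ZMod n) (y : V), y ∈ p.support → G.Adj (a i) y →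
      y = a (i + 1) ∨ y = a (i - 1) := by
    intro i y hy hxy
    have hsub : p.toSubgraph.Adj (a i) y := by
      apply hind _ _ hxy
      · rw [SimpleGraph.Walk.mem_verts_toSubgraph]; exact hmem i
      · rw [SimpleGraph.Walk.mem_verts_toSubgraph]; exact hy
    obtain ⟨k, hsym, hk⟩ := (SimpleGraph.Walk.toSubgraph_adj_iff _).mp hsub
    rw [← hnlen] at hk
    rw [hk_eq k hk, hsucc k hk] at hsym
    rw [Sym2.eq_iff] at hsym
    rcases hsym with ⟨h1, h2⟩ | ⟨h1, h2⟩
    · left; rw [← h2, hinj h1]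
    · right
      have : (k : ZMod n) = i - 1 := by
        have := hinj h2
        rw [← this]; ring
      rw [← h1, this]
  -- each cycle vertex has exactly one neighbor outside the cycle
  have hne2 : ∀ i : ZMod n, a (i + 1) ≠ a (i - 1) := by
    intro i h
    have h2 : (i + 1 : ZMod n) = i - 1 := hinj h
    have h3 : ((2 : ℕ) : ZMod n) = 0 := by
      have : (i + 1) - (i - 1) = (2 : ℕ) := by push_cast; ring
      rw [← this, h2]; ring
    have hdvd : n ∣ 2 := (ZMod.natCast_eq_zero_iff 2 n).mp h3
    have := Nat.le_of_dvd (by omega) hdvd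
    omega
  have hfiltin : ∀ i : ZMod n,
      (G.neighborFinset (a i)).filter (· ∈ p.support) = {a (i + 1), a (i - 1)} := by
    intro i
    ext y
    simp only [Finset.mem_filter, SimpleGraph.mem_neighborFinset, Finset.mem_insert,
      Finset.mem_singleton]
    constructor
    · rintro ⟨h1, h2⟩; exact hadj' i y h2 h1
    · rintro (rfl | rfl)
      · exact ⟨hadj i, hmem _⟩
      · have := (hadj (i - 1)).symm
        rw [sub_add_cancel] at this
        exact ⟨this, hmem _⟩
  have houtside : ∀ i : ZMod n,
      ∃ w, (G.neighborFinset (a i)).filter (· ∉ p.support) = {w} := by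
    intro i
    rw [← Finset.card_eq_one]
    have hsplit := Finset.card_filter_add_card_filter_not
      (s := G.neighborFinset (a i)) (p := (· ∈ p.support))
    rw [hfiltin i] at hsplit
    have hcard2 : ({a (i + 1), a (i - 1)} : Finset V).card = 2 :=
      Finset.card_pair (hne2 i)
    have hdeg3 : (G.neighborFinset (a i)).card = 3 := hdeg _ (hmem i)
    rw [hcard2, hdeg3] at hsplit
    omega
  choose wf hwf using houtside
  have hwf1 : ∀ i : ZMod n, G.Adj (a i) (wf i) ∧ wf i ∉ p.support := by
    intro i
    have : wf i ∈ (G.neighborFinset (a i)).filter (· ∉ p.support) := by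
      rw [hwf i]; exact Finset.mem_singleton_self _
    simpa [Finset.mem_filter] using this
  set f : ZMod n → Fin 3 := fun i => c ⟨wf i, (hwf1 i).2⟩ with hf
  have hfkey : ∀ (i : ZMod n) (w : V) (hw : w ∉ p.support), G.Adj (a i) w →
      c ⟨w, hw⟩ = f i := by
    intro i w hw hadjw
    have hwmem : w ∈ (G.neighborFinset (a i)).filter (· ∉ p.support) := by
      simp [Finset.mem_filter, hadjw, hw]
    rw [hwf i, Finset.mem_singleton] at hwmem
    subst hwmem
    rfl
  -- the forbidden colors are not constant along the cycle
  have hgood : ∃ i : ZMod n, f i ≠ f (i + 1) := by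
    by_contra hcon
    push_neg at hcon
    have hconst : ∀ i : ZMod n, f i = f 0 := by
      have hnat : ∀ k : ℕ, f (k : ZMod n) = f 0 := by
        intro k
        induction k with
        | zero => simp
        | succ k ih =>
          rw [show ((k + 1 : ℕ) : ZMod n) = (k : ZMod n) + 1 by push_cast; ring,
            ← hcon (k : ZMod n), ih]
      intro i
      have := hnat i.val
      rwa [ZMod.natCast_rightInverse i] at this
    apply hnotmono
    refine ⟨f 0, ?_⟩
    rintro w hw ⟨x, hx, hadjxw⟩
    obtain ⟨i, rfl⟩ := hmem' x hx
    rw [hfkey i w hw hadjxw, hconst]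
  -- greedy coloring of the cycle
  obtain ⟨col, hcol1, hcol2⟩ := cycle_color n hn3 f hgood
  let C : V → Fin 3 := fun x =>
    if h : x ∈ p.support then col (Classical.choose (hmem' x h)) else c ⟨x, h⟩
  have hCa : ∀ i : ZMod n, C (a i) = col i := by
    intro i
    have h := hmem i
    simp only [C]
    rw [dif_pos h]
    congr 1
    exact hinj (Classical.choose_spec (hmem' (a i) h))
  have hCout : ∀ (x : V) (h : x ∉ p.support), C x = c ⟨x, h⟩ := by
    intro x h
    simp only [C]
    rw [dif_neg h]
  have hvalid : ∀ {x y : V}, G.Adj x y → C x ≠ C y := by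
    have key : ∀ {x y : V}, G.Adj x y → x ∈ p.support → C x ≠ C y := by
      intro x y hxy hx
      obtain ⟨i, rfl⟩ := hmem' x hx
      by_cases hy : y ∈ p.support
      · rcases hadj' i y hy hxy with rfl | rfl
        · rw [hCa, hCa]; exact hcol2 i
        · rw [hCa, hCa]
          have := hcol2 (i - 1)
          rw [sub_add_cancel] at this
          exact this.symm
      · rw [hCa, hCout y hy, hfkey i y hy hxy]
        exact hcol1 i
    intro x y hxy
    by_cases hx : x ∈ p.support
    · exact key hxy hx
    · by_cases hy : y ∈ p.support
      · exact (key hxy.symm hy).symm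
      · rw [hCout x hx, hCout y hy]
        exact c.valid (by simpa using hxy)
  exact ⟨SimpleGraph.Coloring.mk C hvalid, fun w hw => hCout w hw⟩
end
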